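/- Let Q_a denote the equal-weight mixture of N(a,σ²) and N(−a,σ²). For any u, v ≥ 0, D(Q_u ‖ Q_v) ≤ ((u²−v²)/(2σ⁴))·u² + (v³·max(0, v−u)/(2σ⁸))·(u⁴ + 6u²σ² + 3σ⁴). -/

import Mathlib

/-!
Factor `Q_a(x) = φ_σ(x) · exp(-a²/2σ²) · cosh(a x/σ²)`; then
`log (Q_u/Q_v)(x) = (v² - u²)/2σ² + log cosh(u x/σ²) - log cosh(v x/σ²)`.
Since `t²/2 - log cosh t` and `log cosh t - t²/2 + t⁴/12` are both increasing in `|t|`,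
this log-ratio is bounded above by an even quartic polynomial in `x`, whose integral against
`Q_u` is computed from the Gaussian moments `E x² = u² + σ²`, `E x⁴ = u⁴ + 6u²σ² + 3σ⁴`.
-/

/-- Density of the Gaussian distribution `N(a, σ²)`. -/
noncomputable def gaussPdf (σ a x : ℝ) : ℝ :=
  (Real.sqrt (2 * Real.pi * σ ^ 2))⁻¹ * Real.exp (-(x - a) ^ 2 / (2 * σ ^ 2))

/-- Density of the equal-weight mixture of `N(a, σ²)` and `N(-a, σ²)`. -/
noncomputable def mixPdf (σ a x : ℝ) : ℝ :=
  (1 / 2) * gaussPdf σ a x + (1 / 2) * gaussPdf σ (-a) x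

open Real MeasureTheory Set
open scoped Nat

theorem monotoneOn_Ici_zero_of_hasDerivAt {f f' : ℝ → ℝ} (hf : ∀ x, HasDerivAt f (f' x) x)
    (hf' : ∀ x, 0 < x → 0 ≤ f' x) : MonotoneOn f (Ici 0) :=
  monotoneOn_of_deriv_nonneg (convex_Ici 0)
    (fun x _ => (hf x).continuousAt.continuousWithinAt)
    (fun x _ => (hf x).differentiableAt.differentiableWithinAt)
    (fun x hx => by
      rw [interior_Ici] at hx
      exact (hf x).deriv ▸ hf' x hx)

namespace Real

theorem sinh_le_mul_cosh {t : ℝ} (ht : 0 ≤ t) : sinh t ≤ t * cosh t := by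
  have hmono : MonotoneOn (fun t => t * cosh t - sinh t) (Ici 0) := by
    refine monotoneOn_Ici_zero_of_hasDerivAt (f' := fun t => t * sinh t) (fun x => ?_)
      fun x hx => mul_nonneg hx.le (sinh_nonneg_iff.2 hx.le)
    exact (((hasDerivAt_id' x).mul (hasDerivAt_cosh x)).sub (hasDerivAt_sinh x)).congr_deriv
      (by ring)
  simpa using hmono self_mem_Ici ht ht

theorem sub_pow_three_div_three_mul_cosh_le_sinh {t : ℝ} (ht : 0 ≤ t) :
    (t - t ^ 3 / 3) * cosh t ≤ sinh t := by
  have hmono : MonotoneOn (fun t => sinh t - (t - t ^ 3 / 3) * cosh t) (Ici 0) := by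
    refine monotoneOn_Ici_zero_of_hasDerivAt
      (f' := fun t => t ^ 2 * cosh t - (t - t ^ 3 / 3) * sinh t) (fun x => ?_) fun x hx => ?_
    · exact ((hasDerivAt_sinh x).sub (((hasDerivAt_id' x).sub
        ((hasDerivAt_pow 3 x).div_const 3)).mul (hasDerivAt_cosh x))).congr_deriv
          (by norm_num; ring)
    · -- `x² cosh x ≥ x sinh x ≥ (x - x³/3) sinh x`
      have hs : 0 ≤ sinh x := sinh_nonneg_iff.2 hx.le
      nlinarith [sinh_le_mul_cosh hx.le, mul_nonneg (pow_nonneg hx.le 3) hs]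
  simpa using hmono self_mem_Ici ht ht

theorem monotoneOn_sq_div_two_sub_log_cosh :
    MonotoneOn (fun t => t ^ 2 / 2 - log (cosh t)) (Ici 0) := by
  refine monotoneOn_Ici_zero_of_hasDerivAt (f' := fun t => t - sinh t / cosh t)
    (fun x => ?_) fun x hx => ?_
  · exact (((hasDerivAt_pow 2 x).div_const 2).sub
      ((hasDerivAt_cosh x).log (cosh_pos x).ne')).congr_deriv (by norm_num)
  · rw [sub_nonneg, div_le_iff₀ (cosh_pos x)]
    exact sinh_le_mul_cosh hx.le

theorem monotoneOn_log_cosh_sub_sq_div_two_add_pow_four_div_twelve :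
    MonotoneOn (fun t => log (cosh t) - t ^ 2 / 2 + t ^ 4 / 12) (Ici 0) := by
  refine monotoneOn_Ici_zero_of_hasDerivAt (f' := fun t => sinh t / cosh t - t + t ^ 3 / 3)
    (fun x => ?_) fun x hx => ?_
  · exact ((((hasDerivAt_cosh x).log (cosh_pos x).ne').sub
      ((hasDerivAt_pow 2 x).div_const 2)).add
        ((hasDerivAt_pow 4 x).div_const 12)).congr_deriv (by norm_num; ring)
  · have := (le_div_iff₀ (cosh_pos x)).2 (sub_pow_three_div_three_mul_cosh_le_sinh hx.le)
    linarith

theorem log_cosh_nonneg (t : ℝ) : 0 ≤ log (cosh t) :=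
  log_nonneg (one_le_cosh t)

theorem log_cosh_le_sq_div_two (t : ℝ) : log (cosh t) ≤ t ^ 2 / 2 :=
  (log_le_log (cosh_pos t) (cosh_le_exp_half_sq t)).trans_eq (log_exp _)

theorem log_cosh_sub_log_cosh_le (a b : ℝ) :
    log (cosh a) - log (cosh b) ≤ (a ^ 2 - b ^ 2) / 2 + max 0 (b ^ 4 - a ^ 4) / 12 := by
  -- both sides are even in `a` and in `b`, so compare the monotone functions at `|a|` and `|b|`
  have h4 (t : ℝ) : |t| ^ 4 = t ^ 4 := (by decide : Even 4).pow_abs t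
  rcases le_total |a| |b| with h | h
  · have key := monotoneOn_log_cosh_sub_sq_div_two_add_pow_four_div_twelve
      (abs_nonneg a) (abs_nonneg b) h
    simp only [cosh_abs, sq_abs, h4] at key
    have : 0 ≤ b ^ 4 - a ^ 4 := by
      rw [← h4 a, ← h4 b, sub_nonneg]; exact pow_le_pow_left₀ (abs_nonneg a) h 4
    rw [max_eq_right this]
    linarith
  · have key := monotoneOn_sq_div_two_sub_log_cosh (abs_nonneg b) (abs_nonneg a) h
    simp only [cosh_abs, sq_abs] at key
    linarith [le_max_left 0 (b ^ 4 - a ^ 4)]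

end Real

theorem integral_pow_mul_exp_neg_mul_sq_of_odd {n : ℕ} (hn : Odd n) (b : ℝ) :
    ∫ x : ℝ, x ^ n * exp (-b * x ^ 2) = 0 := by
  have h := integral_neg_eq_self (fun x : ℝ => x ^ n * exp (-b * x ^ 2)) volume
  simp only [hn.neg_pow, neg_sq, neg_mul, integral_neg] at h ⊢
  linarith

theorem integral_pow_two_mul_mul_exp_neg_mul_sq {b : ℝ} (hb : 0 < b) (k : ℕ) :
    ∫ x : ℝ, x ^ (2 * k) * exp (-b * x ^ 2) = (2 * k - 1 : ℕ)‼ / (2 * b) ^ k * √(π / b) := by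
  have h := integral_comp_abs
    (f := fun x : ℝ => x ^ ((2 * k : ℕ) : ℝ) * exp (-b * x ^ ((2 : ℕ) : ℝ)))
  have hΓ := integral_rpow_mul_exp_neg_mul_rpow (p := ((2 : ℕ) : ℝ)) (q := ((2 * k : ℕ) : ℝ))
    (by norm_num) (by have := k.cast_nonneg (α := ℝ); push_cast; linarith) hb
  simp only [rpow_natCast, (even_two_mul k).pow_abs, sq_abs] at h hΓ
  rw [h, hΓ]
  push_cast
  rw [show (2 * k + 1 : ℝ) / 2 = k + 1 / 2 by ring, Gamma_nat_add_half]
  rw [show -(2 * k + 1 : ℝ) / 2 = -k + -(1 / 2) by ring, rpow_add hb, rpow_neg hb.le,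
    rpow_neg hb.le, rpow_natCast, ← sqrt_eq_rpow, sqrt_div' _ hb.le, mul_pow]
  have : 0 < √b := sqrt_pos.2 hb
  field_simp

section Gaussian

variable {σ : ℝ}

theorem gaussPdf_zero_apply (σ x : ℝ) :
    gaussPdf σ 0 x = (√(2 * π * σ ^ 2))⁻¹ * exp (-(2 * σ ^ 2)⁻¹ * x ^ 2) := by
  rw [gaussPdf, sub_zero]
  congr 2
  ring

theorem gaussPdf_apply_eq_gaussPdf_zero (σ a x : ℝ) : gaussPdf σ a x = gaussPdf σ 0 (x - a) := by
  rw [gaussPdf, gaussPdf, sub_zero]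

theorem gaussPdf_pos (hσ : σ ≠ 0) (a x : ℝ) : 0 < gaussPdf σ a x := by
  have : 0 < √(2 * π * σ ^ 2) := sqrt_pos.2 (by positivity)
  unfold gaussPdf
  positivity

theorem gaussPdf_eq_gaussPdf_zero_mul_exp (hσ : σ ≠ 0) (a x : ℝ) :
    gaussPdf σ a x = gaussPdf σ 0 x * exp (-a ^ 2 / (2 * σ ^ 2) + a * x / σ ^ 2) := by
  rw [gaussPdf, gaussPdf, mul_assoc _ (exp _), ← exp_add]
  congr 2
  field_simp
  ring

theorem integrable_pow_mul_gaussPdf_zero (hσ : σ ≠ 0) (n : ℕ) :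
    Integrable fun x => x ^ n * gaussPdf σ 0 x := by
  have h := integrable_rpow_mul_exp_neg_mul_sq (b := (2 * σ ^ 2)⁻¹) (by positivity)
    (s := n) (by linarith [n.cast_nonneg (α := ℝ)])
  simp only [rpow_natCast] at h
  simpa only [gaussPdf_zero_apply, mul_left_comm] using h.const_mul (√(2 * π * σ ^ 2))⁻¹

theorem integral_pow_mul_gaussPdf_zero_of_odd (σ : ℝ) {n : ℕ} (hn : Odd n) :
    ∫ x, x ^ n * gaussPdf σ 0 x = 0 := by
  simp only [gaussPdf_zero_apply, mul_left_comm _ (√(2 * π * σ ^ 2))⁻¹, integral_const_mul,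
    integral_pow_mul_exp_neg_mul_sq_of_odd hn, mul_zero]

theorem integral_pow_two_mul_mul_gaussPdf_zero (hσ : σ ≠ 0) (k : ℕ) :
    ∫ x, x ^ (2 * k) * gaussPdf σ 0 x = (2 * k - 1 : ℕ)‼ * σ ^ (2 * k) := by
  simp only [gaussPdf_zero_apply, mul_left_comm _ (√(2 * π * σ ^ 2))⁻¹, integral_const_mul]
  rw [integral_pow_two_mul_mul_exp_neg_mul_sq (by positivity), div_inv_eq_mul,
    show π * (2 * σ ^ 2) = 2 * π * σ ^ 2 by ring]
  rw [show 2 * (2 * σ ^ 2)⁻¹ = (σ ^ 2)⁻¹ by field_simp, inv_pow, div_inv_eq_mul, ← pow_mul]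
  have : 0 < √(2 * π * σ ^ 2) := sqrt_pos.2 (by positivity)
  field_simp

theorem add_pow_mul_gaussPdf_zero (σ a x : ℝ) (n : ℕ) :
    (x + a) ^ n * gaussPdf σ 0 x
      = ∑ m ∈ Finset.range (n + 1), a ^ (n - m) * n.choose m * (x ^ m * gaussPdf σ 0 x) := by
  rw [add_pow, Finset.sum_mul]
  exact Finset.sum_congr rfl fun m _ => by ring

theorem integrable_pow_mul_gaussPdf (hσ : σ ≠ 0) (n : ℕ) (a : ℝ) :
    Integrable fun x => x ^ n * gaussPdf σ a x := by
  have h : Integrable fun x => (x + a) ^ n * gaussPdf σ 0 x := by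
    simp only [add_pow_mul_gaussPdf_zero]
    exact integrable_finsetSum _ fun m _ => (integrable_pow_mul_gaussPdf_zero hσ m).const_mul _
  simpa only [sub_add_cancel, ← gaussPdf_apply_eq_gaussPdf_zero] using h.comp_sub_right a

theorem integral_pow_mul_gaussPdf (σ : ℝ) (n : ℕ) (a : ℝ) :
    ∫ x, x ^ n * gaussPdf σ a x = ∫ x, (x + a) ^ n * gaussPdf σ 0 x := by
  simp only [gaussPdf_apply_eq_gaussPdf_zero σ a]
  simpa only [sub_add_cancel] using
    integral_sub_right_eq_self (fun x => (x + a) ^ n * gaussPdf σ 0 x) a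

theorem integral_pow_mul_gaussPdf_eq_sum (hσ : σ ≠ 0) (n : ℕ) (a : ℝ) :
    ∫ x, x ^ n * gaussPdf σ a x
      = ∑ m ∈ Finset.range (n + 1), a ^ (n - m) * n.choose m * ∫ x, x ^ m * gaussPdf σ 0 x := by
  simp_rw [integral_pow_mul_gaussPdf σ n a, add_pow_mul_gaussPdf_zero]
  rw [integral_finsetSum _ fun m _ => (integrable_pow_mul_gaussPdf_zero hσ m).const_mul _]
  simp only [integral_const_mul]

theorem integral_gaussPdf (hσ : σ ≠ 0) (a : ℝ) : ∫ x, gaussPdf σ a x = 1 := by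
  have m0 := integral_pow_two_mul_mul_gaussPdf_zero hσ 0
  norm_num at m0
  simpa [m0] using integral_pow_mul_gaussPdf_eq_sum hσ 0 a

theorem integral_sq_mul_gaussPdf (hσ : σ ≠ 0) (a : ℝ) :
    ∫ x, x ^ 2 * gaussPdf σ a x = a ^ 2 + σ ^ 2 := by
  have m0 := integral_pow_two_mul_mul_gaussPdf_zero hσ 0
  have m2 := integral_pow_two_mul_mul_gaussPdf_zero hσ 1
  have m1 := integral_pow_mul_gaussPdf_zero_of_odd σ odd_one
  norm_num at m0 m1 m2
  rw [integral_pow_mul_gaussPdf_eq_sum hσ]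
  simp [Finset.sum_range_succ, m0, m1, m2]

theorem integral_pow_four_mul_gaussPdf (hσ : σ ≠ 0) (a : ℝ) :
    ∫ x, x ^ 4 * gaussPdf σ a x = a ^ 4 + 6 * a ^ 2 * σ ^ 2 + 3 * σ ^ 4 := by
  have m0 := integral_pow_two_mul_mul_gaussPdf_zero hσ 0
  have m2 := integral_pow_two_mul_mul_gaussPdf_zero hσ 1
  have m4 := integral_pow_two_mul_mul_gaussPdf_zero hσ 2
  have m1 := integral_pow_mul_gaussPdf_zero_of_odd σ odd_one
  have m3 := integral_pow_mul_gaussPdf_zero_of_odd σ (by decide : Odd 3)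
  norm_num at m0 m1 m2 m4
  rw [integral_pow_mul_gaussPdf_eq_sum hσ]
  simp only [Finset.sum_range_succ, Finset.sum_range_zero, pow_zero, pow_one, one_mul,
    m0, m1, m2, m3, m4]
  norm_num [Nat.choose, mul_comm]

end Gaussian

section Mixture

variable {σ : ℝ}

theorem mixPdf_pos (hσ : σ ≠ 0) (a x : ℝ) : 0 < mixPdf σ a x := by
  unfold mixPdf
  linarith [gaussPdf_pos hσ a x, gaussPdf_pos hσ (-a) x]

theorem continuous_mixPdf (σ a : ℝ) : Continuous (mixPdf σ a) := by
  unfold mixPdf gaussPdf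
  fun_prop

theorem mixPdf_eq_gaussPdf_zero_mul_cosh (hσ : σ ≠ 0) (a x : ℝ) :
    mixPdf σ a x = gaussPdf σ 0 x * exp (-a ^ 2 / (2 * σ ^ 2)) * cosh (a * x / σ ^ 2) := by
  rw [mixPdf, gaussPdf_eq_gaussPdf_zero_mul_exp hσ a, gaussPdf_eq_gaussPdf_zero_mul_exp hσ (-a)]
  simp only [exp_add, cosh_eq, neg_sq, neg_mul, neg_div]
  ring

theorem log_mixPdf_div_mixPdf (hσ : σ ≠ 0) (u v x : ℝ) :
    log (mixPdf σ u x / mixPdf σ v x)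
      = (v ^ 2 - u ^ 2) / (2 * σ ^ 2)
        + (log (cosh (u * x / σ ^ 2)) - log (cosh (v * x / σ ^ 2))) := by
  have hlog (a : ℝ) : log (mixPdf σ a x)
      = log (gaussPdf σ 0 x) + -a ^ 2 / (2 * σ ^ 2) + log (cosh (a * x / σ ^ 2)) := by
    rw [mixPdf_eq_gaussPdf_zero_mul_cosh hσ, log_mul (by positivity [gaussPdf_pos hσ 0 x])
      (cosh_pos _).ne', log_mul (gaussPdf_pos hσ 0 x).ne' (exp_pos _).ne', log_exp]
  rw [log_div (mixPdf_pos hσ u x).ne' (mixPdf_pos hσ v x).ne', hlog u, hlog v]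
  ring

theorem log_mixPdf_div_mixPdf_le (hσ : σ ≠ 0) (u v x : ℝ) :
    log (mixPdf σ u x / mixPdf σ v x)
      ≤ (v ^ 2 - u ^ 2) / (2 * σ ^ 2) + (u ^ 2 - v ^ 2) / (2 * σ ^ 4) * x ^ 2
        + max 0 (v ^ 4 - u ^ 4) / (12 * σ ^ 8) * x ^ 4 := by
  have h := log_cosh_sub_log_cosh_le (u * x / σ ^ 2) (v * x / σ ^ 2)
  have hsq : ((u * x / σ ^ 2) ^ 2 - (v * x / σ ^ 2) ^ 2) / 2
      = (u ^ 2 - v ^ 2) / (2 * σ ^ 4) * x ^ 2 := by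
    field_simp
  have hquart : max 0 ((v * x / σ ^ 2) ^ 4 - (u * x / σ ^ 2) ^ 4) / 12
      = max 0 (v ^ 4 - u ^ 4) / (12 * σ ^ 8) * x ^ 4 := by
    have hmax := max_mul_of_nonneg 0 (v ^ 4 - u ^ 4) (by positivity : 0 ≤ x ^ 4 / σ ^ 8)
    rw [zero_mul] at hmax
    rw [show (v * x / σ ^ 2) ^ 4 - (u * x / σ ^ 2) ^ 4 = (v ^ 4 - u ^ 4) * (x ^ 4 / σ ^ 8) by
      field_simp, ← hmax]
    ring
  rw [hsq, hquart] at h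
  rw [log_mixPdf_div_mixPdf hσ]
  linarith

theorem abs_log_mixPdf_div_mixPdf_le (hσ : σ ≠ 0) (u v x : ℝ) :
    |log (mixPdf σ u x / mixPdf σ v x)|
      ≤ |(v ^ 2 - u ^ 2) / (2 * σ ^ 2)| + (u ^ 2 + v ^ 2) / (2 * σ ^ 4) * x ^ 2 := by
  have hsq : (u * x / σ ^ 2) ^ 2 / 2 + (v * x / σ ^ 2) ^ 2 / 2
      = (u ^ 2 + v ^ 2) / (2 * σ ^ 4) * x ^ 2 := by
    field_simp
  have hcosh : |log (cosh (u * x / σ ^ 2)) - log (cosh (v * x / σ ^ 2))|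
      ≤ (u ^ 2 + v ^ 2) / (2 * σ ^ 4) * x ^ 2 := by
    rw [← hsq, abs_le]
    have := log_cosh_nonneg (u * x / σ ^ 2)
    have := log_cosh_nonneg (v * x / σ ^ 2)
    have := log_cosh_le_sq_div_two (u * x / σ ^ 2)
    have := log_cosh_le_sq_div_two (v * x / σ ^ 2)
    constructor <;> nlinarith
  rw [log_mixPdf_div_mixPdf hσ]
  exact (abs_add_le _ _).trans (by linarith)

theorem integrable_pow_mul_mixPdf (hσ : σ ≠ 0) (n : ℕ) (a : ℝ) :
    Integrable fun x => x ^ n * mixPdf σ a x := by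
  simp only [mixPdf, mul_add, mul_left_comm _ (1 / 2 : ℝ)]
  exact ((integrable_pow_mul_gaussPdf hσ n a).const_mul _).add
    ((integrable_pow_mul_gaussPdf hσ n (-a)).const_mul _)

theorem integral_pow_mul_mixPdf (hσ : σ ≠ 0) (n : ℕ) (a : ℝ) :
    ∫ x, x ^ n * mixPdf σ a x
      = ((∫ x, x ^ n * gaussPdf σ a x) + ∫ x, x ^ n * gaussPdf σ (-a) x) / 2 := by
  simp only [mixPdf, mul_add, mul_left_comm _ (1 / 2 : ℝ)]
  rw [integral_add ((integrable_pow_mul_gaussPdf hσ n a).const_mul _)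
    ((integrable_pow_mul_gaussPdf hσ n (-a)).const_mul _), integral_const_mul, integral_const_mul]
  ring

theorem mixPdf_mul_quartic_eq (σ a c₀ c₂ c₄ x : ℝ) :
    mixPdf σ a x * (c₀ + c₂ * x ^ 2 + c₄ * x ^ 4)
      = c₀ * (x ^ 0 * mixPdf σ a x) + c₂ * (x ^ 2 * mixPdf σ a x)
        + c₄ * (x ^ 4 * mixPdf σ a x) := by
  ring

theorem integrable_mixPdf_mul_quartic (hσ : σ ≠ 0) (a c₀ c₂ c₄ : ℝ) :
    Integrable fun x => mixPdf σ a x * (c₀ + c₂ * x ^ 2 + c₄ * x ^ 4) := by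
  simp only [mixPdf_mul_quartic_eq]
  exact (((integrable_pow_mul_mixPdf hσ 0 a).const_mul _).add
    ((integrable_pow_mul_mixPdf hσ 2 a).const_mul _)).add
      ((integrable_pow_mul_mixPdf hσ 4 a).const_mul _)

theorem integral_mixPdf_mul_quartic (hσ : σ ≠ 0) (a c₀ c₂ c₄ : ℝ) :
    ∫ x, mixPdf σ a x * (c₀ + c₂ * x ^ 2 + c₄ * x ^ 4)
      = c₀ + c₂ * (a ^ 2 + σ ^ 2) + c₄ * (a ^ 4 + 6 * a ^ 2 * σ ^ 2 + 3 * σ ^ 4) := by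
  have h₀ := (integrable_pow_mul_mixPdf hσ 0 a).const_mul c₀
  have h₂ := (integrable_pow_mul_mixPdf hσ 2 a).const_mul c₂
  have h₄ := (integrable_pow_mul_mixPdf hσ 4 a).const_mul c₄
  simp only [mixPdf_mul_quartic_eq]
  rw [integral_add ?_ h₄, integral_add h₀ h₂]
  · simp only [integral_const_mul, integral_pow_mul_mixPdf hσ]
    simp only [pow_zero, one_mul, integral_gaussPdf hσ, integral_sq_mul_gaussPdf hσ,
      integral_pow_four_mul_gaussPdf hσ]
    ring
  · exact h₀.add h₂

theorem integrable_mixPdf_mul_log_mixPdf_div_mixPdf (hσ : σ ≠ 0) (u v : ℝ) :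
    Integrable fun x => mixPdf σ u x * log (mixPdf σ u x / mixPdf σ v x) := by
  refine (integrable_mixPdf_mul_quartic hσ u |(v ^ 2 - u ^ 2) / (2 * σ ^ 2)|
    ((u ^ 2 + v ^ 2) / (2 * σ ^ 4)) 0).mono' ?_ (.of_forall fun x => ?_)
  · exact ((continuous_mixPdf σ u).mul (((continuous_mixPdf σ u).div (continuous_mixPdf σ v)
      fun x => (mixPdf_pos hσ v x).ne').log fun x =>
        (div_pos (mixPdf_pos hσ u x) (mixPdf_pos hσ v x)).ne')).aestronglyMeasurable
  · rw [norm_mul, norm_of_nonneg (mixPdf_pos hσ u x).le, zero_mul, add_zero]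
    exact mul_le_mul_of_nonneg_left (abs_log_mixPdf_div_mixPdf_le hσ u v x)
      (mixPdf_pos hσ u x).le

end Mixture

theorem max_zero_sub_pow_four_div_twelve_le {u v : ℝ} (hu : 0 ≤ u) (hv : 0 ≤ v) :
    max 0 (v ^ 4 - u ^ 4) / 12 ≤ v ^ 3 * max 0 (v - u) / 2 := by
  rcases le_total v u with h | h
  · rw [max_eq_left (by linarith [pow_le_pow_left₀ hv h 4]), max_eq_left (by linarith)]
    simp
  · -- `v⁴ - u⁴ = (v - u)(v + u)(v² + u²) ≤ 4 v³ (v - u)`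
    rw [max_eq_right (by linarith [pow_le_pow_left₀ hu h 4]), max_eq_right (by linarith)]
    have : (v + u) * (v ^ 2 + u ^ 2) ≤ 4 * v ^ 3 := by nlinarith [mul_nonneg hu hv]
    nlinarith [mul_le_mul_of_nonneg_left this (sub_nonneg.2 h),
      mul_nonneg (pow_nonneg hv 3) (sub_nonneg.2 h)]

theorem kl_mixture_bound (σ u v : ℝ) (hσ : 0 < σ) (hu : 0 ≤ u) (hv : 0 ≤ v) :
    ∫ x : ℝ, mixPdf σ u x * Real.log (mixPdf σ u x / mixPdf σ v x)
      ≤ ((u ^ 2 - v ^ 2) / (2 * σ ^ 4)) * u ^ 2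
        + (v ^ 3 * max 0 (v - u) / (2 * σ ^ 8))
            * (u ^ 4 + 6 * u ^ 2 * σ ^ 2 + 3 * σ ^ 4) := by
  have hσ₀ := hσ.ne'
  calc ∫ x, mixPdf σ u x * log (mixPdf σ u x / mixPdf σ v x)
      ≤ ∫ x, mixPdf σ u x * ((v ^ 2 - u ^ 2) / (2 * σ ^ 2) + (u ^ 2 - v ^ 2) / (2 * σ ^ 4) * x ^ 2
          + max 0 (v ^ 4 - u ^ 4) / (12 * σ ^ 8) * x ^ 4) :=
        integral_mono (integrable_mixPdf_mul_log_mixPdf_div_mixPdf hσ₀ u v)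
          (integrable_mixPdf_mul_quartic hσ₀ u _ _ _) fun x =>
            mul_le_mul_of_nonneg_left (log_mixPdf_div_mixPdf_le hσ₀ u v x) (mixPdf_pos hσ₀ u x).le
    _ = (v ^ 2 - u ^ 2) / (2 * σ ^ 2) + (u ^ 2 - v ^ 2) / (2 * σ ^ 4) * (u ^ 2 + σ ^ 2)
          + max 0 (v ^ 4 - u ^ 4) / (12 * σ ^ 8) * (u ^ 4 + 6 * u ^ 2 * σ ^ 2 + 3 * σ ^ 4) :=
        integral_mixPdf_mul_quartic hσ₀ u _ _ _
    _ ≤ _ := by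
      have hmax : max 0 (v ^ 4 - u ^ 4) / (12 * σ ^ 8) ≤ v ^ 3 * max 0 (v - u) / (2 * σ ^ 8) := by
        simpa only [div_div, mul_comm] using div_le_div_of_nonneg_right
          (max_zero_sub_pow_four_div_twelve_le hu hv) (by positivity : (0 : ℝ) ≤ σ ^ 8)
      have hlin : (v ^ 2 - u ^ 2) / (2 * σ ^ 2) + (u ^ 2 - v ^ 2) / (2 * σ ^ 4) * (u ^ 2 + σ ^ 2)
          = (u ^ 2 - v ^ 2) / (2 * σ ^ 4) * u ^ 2 := by
        field_simp
        ring
      rw [hlin]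
      gcongr
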